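/- Let G be a connected graph of order n ≥ 2 without true twin vertices, let H be a connected graph of order m ≥ 2 with diam(H) ≤ 2, and set n' = |M(G)| and m' = |M(H)|. Then sdim_f(G[H]) ≥ max{ n·sdim_f(H) + (m − m')·sdim_f(G), (n − n')·sdim_f(H) + m·sdim_f(G) } and sdim_f(G[H]) ≤ (n·m' + m·n' − n'·m')/2. -/

import Mathlib

open SimpleGraph

/-- `Sset G x y` is the set `S{x,y}` of vertices `z` such that `x` lies on some shortest
`y`–`z` path or `y` lies on some shortest `x`–`z` path in `G`. -/
def Sset {V : Type*} (G : SimpleGraph V) (x y : V) : Set V :=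
  {z | (∃ p : G.Walk y z, p.length = G.dist y z ∧ x ∈ p.support) ∨
       (∃ p : G.Walk x z, p.length = G.dist x z ∧ y ∈ p.support)}

/-- A strong resolving function of `G`: `g : V → [0,1]` with `g(S{x,y}) ≥ 1` for all
distinct vertices `x, y`. -/
def IsSRF {V : Type*} (G : SimpleGraph V) (g : V → ℝ) : Prop :=
  (∀ v, 0 ≤ g v ∧ g v ≤ 1) ∧ ∀ x y : V, x ≠ y → 1 ≤ ∑ᶠ z ∈ Sset G x y, g z

/-- The fractional strong metric dimension of `G`. -/
noncomputable def sdimf {V : Type*} (G : SimpleGraph V) : ℝ :=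
  sInf {s : ℝ | ∃ g : V → ℝ, IsSRF G g ∧ s = ∑ᶠ v, g v}

/-- A strong resolving set of `G`: every pair of distinct vertices is strongly resolved
by some vertex of `S` (i.e. some vertex of `S` lies in `S{x,y}`). -/
def IsSRSet {V : Type*} (G : SimpleGraph V) (S : Set V) : Prop :=
  ∀ x y : V, x ≠ y → ∃ z ∈ S, z ∈ Sset G x y

/-- The strong metric dimension of `G`: the minimum cardinality of a strong resolving set. -/
noncomputable def sdim {V : Type*} (G : SimpleGraph V) : ℕ :=
  sInf {n : ℕ | ∃ S : Set V, IsSRSet G S ∧ S.ncard = n}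

/-- `u` is maximally distant from `v`: `d(u,v) ≥ d(w,v)` for every neighbor `w` of `u`. -/
def MaxDistFrom {V : Type*} (G : SimpleGraph V) (u v : V) : Prop :=
  ∀ w : V, G.Adj u w → G.dist w v ≤ G.dist u v

/-- `u` and `v` are mutually maximally distant (MMD) in `G`. -/
def MMD {V : Type*} (G : SimpleGraph V) (u v : V) : Prop :=
  u ≠ v ∧ MaxDistFrom G u v ∧ MaxDistFrom G v u

/-- The strong resolving graph of `G` (on the ambient vertex set): `u ~ v` iff `u` MMD `v`. -/
def SRGraph {V : Type*} (G : SimpleGraph V) : SimpleGraph V where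
  Adj := MMD G
  symm := ⟨fun _ _ h => ⟨h.1.symm, h.2.2, h.2.1⟩⟩
  loopless := ⟨fun _ h => h.1 rfl⟩

/-- `M(G)`: the set of vertices that are mutually maximally distant with some vertex. -/
def Mset {V : Type*} (G : SimpleGraph V) : Set V := {x | ∃ y, MMD G x y}

/-- The matching number of `G`. -/
noncomputable def matchNum {V : Type*} (G : SimpleGraph V) : ℕ :=
  sSup {n : ℕ | ∃ M : G.Subgraph, M.IsMatching ∧ M.edgeSet.ncard = n}

/-- The corona product `G ⊙ H`. -/
def corona {V W : Type*} (G : SimpleGraph V) (H : SimpleGraph W) :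
    SimpleGraph (V ⊕ V × W) where
  Adj x y :=
    match x, y with
    | Sum.inl u, Sum.inl u' => G.Adj u u'
    | Sum.inl u, Sum.inr iw => u = iw.1
    | Sum.inr iw, Sum.inl u => iw.1 = u
    | Sum.inr iw, Sum.inr iw' => iw.1 = iw'.1 ∧ H.Adj iw.2 iw'.2
  symm := by
    constructor
    rintro (u | iw) (u' | iw') h
    · exact h.symm
    · exact h.symm
    · exact h.symm
    · exact ⟨h.1.symm, h.2.symm⟩
  loopless := by
    constructor
    rintro (u | iw) h
    · exact h.ne rfl
    · exact h.2.ne rfl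

/-- `K₁ ⊙ H`: the graph obtained from `H` by adding one new vertex adjacent to every
vertex of `H`. -/
def cone {W : Type*} (H : SimpleGraph W) : SimpleGraph (Option W) where
  Adj x y :=
    match x, y with
    | none, none => False
    | none, some _ => True
    | some _, none => True
    | some w, some w' => H.Adj w w'
  symm := by
    constructor
    rintro (_ | w) (_ | w') h
    · exact h
    · exact trivial
    · exact trivial
    · exact h.symm
  loopless := by
    constructor
    rintro (_ | w) h
    · exact h
    · exact h.ne rfl

/-- The lexicographic product `G[H]`. -/
def lexProd {V W : Type*} (G : SimpleGraph V) (H : SimpleGraph W) :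
    SimpleGraph (V × W) where
  Adj x y := G.Adj x.1 y.1 ∨ (x.1 = y.1 ∧ H.Adj x.2 y.2)
  symm := by
    constructor
    rintro x y (h | ⟨h1, h2⟩)
    · exact Or.inl h.symm
    · exact Or.inr ⟨h1.symm, h2.symm⟩
  loopless := by
    constructor
    rintro x (h | ⟨_, h2⟩)
    · exact h.ne rfl
    · exact h2.ne rfl

/-- `SL{x,y} = (N[x] ∪ N[y]) ∩ S{x,y}`. -/
def SLset {W : Type*} (H : SimpleGraph W) (x y : W) : Set W :=
  (insert x (H.neighborSet x) ∪ insert y (H.neighborSet y)) ∩ Sset H x y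

/-- A strong locating function of `H`. -/
def IsSLF {W : Type*} (H : SimpleGraph W) (f : W → ℝ) : Prop :=
  (∀ v, 0 ≤ f v ∧ f v ≤ 1) ∧ ∀ x y : W, x ≠ y → 1 ≤ ∑ᶠ z ∈ SLset H x y, f z

/-- `sl_f(H)`: the minimum weight of a strong locating function of `H`. -/
noncomputable def slf {W : Type*} (H : SimpleGraph W) : ℝ :=
  sInf {s : ℝ | ∃ f : W → ℝ, IsSLF H f ∧ s = ∑ᶠ v, f v}

/-- `u` has a true twin: some other vertex with the same closed neighborhood. -/
def HasTrueTwin {V : Type*} (G : SimpleGraph V) (u : V) : Prop :=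
  ∃ v : V, v ≠ u ∧ insert v (G.neighborSet v) = insert u (G.neighborSet u)

/-- `u` has a false twin: some other vertex with the same open neighborhood. -/
def HasFalseTwin {V : Type*} (G : SimpleGraph V) (u : V) : Prop :=
  ∃ v : V, v ≠ u ∧ G.neighborSet v = G.neighborSet u

/-- `m₁(G)`: number of vertices in type-1 (singleton) classes of the twin relation. -/
noncomputable def m1 {V : Type*} (G : SimpleGraph V) : ℕ :=
  {u : V | ¬ HasTrueTwin G u ∧ ¬ HasFalseTwin G u}.ncard

/-- `m₂(G)`: number of vertices in type-2 (clique) classes of the twin relation. -/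
noncomputable def m2 {V : Type*} (G : SimpleGraph V) : ℕ :=
  {u : V | HasTrueTwin G u}.ncard

/-- `m₃(G)`: number of vertices in type-3 (independent set) classes of the twin relation. -/
noncomputable def m3 {V : Type*} (G : SimpleGraph V) : ℕ :=
  {u : V | HasFalseTwin G u}.ncard

/-- The strong resolving graph of `G` (whose vertex set is `M(G)`) is Hamiltonian:
there is a cycle in `SRGraph G` passing through every vertex of `M(G)`. -/
def SRHamiltonian {V : Type*} (G : SimpleGraph V) : Prop :=
  ∃ (u : V) (p : (SRGraph G).Walk u u), p.IsCycle ∧ ∀ v ∈ Mset G, v ∈ p.support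

/-! In a connected graph, `S{u,v} = {u,v}` for an MMD pair, and every set `S{x,y}` contains
both ends of some MMD pair (extend a geodesic through `x` and `y` maximally at both ends). So a
strong resolving function is just a `[0,1]`-weighting giving weight `≥ 1` to every MMD pair.
Without true twins in `G`, an MMD pair of `G` is never an edge, and with `diam H ≤ 2` the fibres
of `G[H]` are isometric copies of `H`; hence the MMD pairs of `G[H]` are the pairs
`(u,v), (u',v')` with `u, u'` MMD in `G`, and the pairs `(u,v), (u,v')` with `v, v'` MMD in `H`.
Consequently the rows of a strong resolving function of `G[H]`, restricted to `M(H)`, resolve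
`H`, and its columns, restricted to `M(G)`, resolve `G`; summing over all rows and the columns
outside `M(H)` (or all columns and the rows outside `M(G)`) gives the lower bounds. The weight
`1/2` on `M(G[H]) = M(G) × W ∪ V × M(H)` gives the upper bound. -/
namespace SimpleGraph

variable {V V' : Type*} {G : SimpleGraph V} {a b c u v : V}

lemma Connected.exists_walk_mem_support_iff (hG : G.Connected) :
    (∃ p : G.Walk a c, p.length = G.dist a c ∧ b ∈ p.support) ↔
      G.dist a b + G.dist b c = G.dist a c := by
  classical
  constructor
  · rintro ⟨p, hp, hb⟩
    have h₁ := dist_le (p.takeUntil b hb)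
    have h₂ := dist_le (p.dropUntil b hb)
    have hlen := congrArg Walk.length (p.take_spec hb)
    rw [Walk.length_append] at hlen
    have := hG.dist_triangle (u := a) (v := b) (w := c)
    omega
  · intro h
    obtain ⟨p, hp⟩ := hG.exists_walk_length_eq_dist a b
    obtain ⟨q, hq⟩ := hG.exists_walk_length_eq_dist b c
    exact ⟨p.append q, by rw [Walk.length_append, hp, hq, h], by simp⟩

lemma Reachable.dist_map_le {G' : SimpleGraph V'} (f : G →g G') (h : G.Reachable u v) :
    G'.dist (f u) (f v) ≤ G.dist u v := by
  obtain ⟨p, hp⟩ := h.exists_walk_length_eq_dist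
  rw [← hp, ← Walk.length_map f]
  exact dist_le _

end SimpleGraph

open SimpleGraph

section Resolving

variable {V : Type*} {G : SimpleGraph V} {u v w x y z : V}

lemma MMD.symm (h : MMD G u v) : MMD G v u := ⟨h.1.symm, h.2.2, h.2.1⟩

lemma mem_Sset_iff (hG : G.Connected) :
    z ∈ Sset G x y ↔ G.dist y x + G.dist x z = G.dist y z ∨
      G.dist x y + G.dist y z = G.dist x z :=
  hG.exists_walk_mem_support_iff.or hG.exists_walk_mem_support_iff

lemma MaxDistFrom.eq_of_dist_add_dist_eq (hG : G.Connected) (h : MaxDistFrom G u v)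
    (hz : G.dist v u + G.dist u z = G.dist v z) : z = u := by
  by_contra hzu
  obtain ⟨p, hp⟩ := hG.exists_walk_length_eq_dist u z
  cases p with
  | nil => exact hzu rfl
  | @cons _ w _ hadj q =>
    have hq := dist_le q
    have hw := h w hadj
    have := hG.dist_triangle (u := v) (v := w) (w := z)
    rw [Walk.length_cons] at hp
    rw [dist_comm (u := w), dist_comm (u := u)] at hw
    omega

lemma Sset_eq_of_mmd (hG : G.Connected) (h : MMD G u v) : Sset G u v = {u, v} := by
  ext z
  rw [mem_Sset_iff hG]
  constructor
  · rintro (hz | hz)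
    · exact Or.inl (h.2.1.eq_of_dist_add_dist_eq hG hz)
    · exact Or.inr (h.2.2.eq_of_dist_add_dist_eq hG hz)
  · rintro (rfl | rfl) <;> simp

lemma MaxDistFrom.closedNbhd_subset (h : MaxDistFrom G u v) (huv : G.Adj u v) :
    insert u (G.neighborSet u) ⊆ insert v (G.neighborSet v) := by
  rintro w (rfl | hw)
  · exact Or.inr huv.symm
  · have hwv := h w hw
    rw [dist_eq_one_iff_adj.2 huv] at hwv
    interval_cases hd : G.dist w v
    · exact Or.inl (((hw.symm.reachable.trans huv.reachable).dist_eq_zero_iff).1 hd)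
    · exact Or.inr (dist_eq_one_iff_adj.1 hd).symm

lemma MMD.not_adj
    (htwinfree : ∀ u v : V, insert u (G.neighborSet u) = insert v (G.neighborSet v) → u = v)
    (h : MMD G u v) : ¬G.Adj u v := fun huv =>
  h.1 <| htwinfree u v <|
    (h.2.1.closedNbhd_subset huv).antisymm (h.2.2.closedNbhd_subset huv.symm)

lemma sdimf_le {g : V → ℝ} (hg : IsSRF G g) : sdimf G ≤ ∑ᶠ v, g v :=
  csInf_le ⟨0, by rintro _ ⟨f, hf, rfl⟩; exact finsum_nonneg fun v => (hf.1 v).1⟩ ⟨g, hg, rfl⟩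

variable [Finite V]

lemma SimpleGraph.Connected.exists_dist_add_dist_eq_maxDistFrom (hG : G.Connected) (u v : V) :
    ∃ w, G.dist u v + G.dist v w = G.dist u w ∧ MaxDistFrom G w u := by
  obtain ⟨w, hw, hmax⟩ := Set.exists_max_image {w | G.dist u v + G.dist v w = G.dist u w}
    (G.dist u) (Set.toFinite _) ⟨v, by simp⟩
  refine ⟨w, hw, fun x hx => ?_⟩
  by_contra! hlt
  have hwx := dist_eq_one_iff_adj.2 hx
  have := hG.dist_triangle (u := u) (v := w) (w := x)
  have := hG.dist_triangle (u := v) (v := w) (w := x)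
  have := hG.dist_triangle (u := u) (v := v) (w := x)
  rw [dist_comm (u := x), dist_comm (u := w)] at hlt
  have := hmax x (by simp only [Set.mem_ofPred_eq] at hw ⊢; omega)
  omega

lemma exists_mmd_mem_Sset (hG : G.Connected) (hxy : x ≠ y) :
    ∃ u v, MMD G u v ∧ u ∈ Sset G x y ∧ v ∈ Sset G x y := by
  obtain ⟨u, hu, huy⟩ := hG.exists_dist_add_dist_eq_maxDistFrom y x
  obtain ⟨v, hv, hvu⟩ := hG.exists_dist_add_dist_eq_maxDistFrom u y
  -- `y` lies on a `u`–`v` geodesic, so `u` is also maximally distant from `v`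
  have huv : MaxDistFrom G u v := fun w hw => by
    have := huy w hw
    have := hG.dist_triangle (u := w) (v := y) (w := v)
    omega
  have hpos := hG.pos_dist_of_ne hxy
  have := hG.dist_triangle (u := u) (v := x) (w := v)
  have := hG.dist_triangle (u := x) (v := y) (w := v)
  have := dist_comm (G := G) (u := u) (v := y)
  have := dist_comm (G := G) (u := u) (v := x)
  have := dist_comm (G := G) (u := x) (v := y)
  refine ⟨u, v, ⟨fun h => ?_, huv, hvu⟩, (mem_Sset_iff hG).2 (Or.inl hu),
    (mem_Sset_iff hG).2 (Or.inr (by omega))⟩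
  subst h
  simp only [dist_self] at hv
  omega

lemma isSRF_iff (hG : G.Connected) {g : V → ℝ} :
    IsSRF G g ↔ (∀ v, 0 ≤ g v ∧ g v ≤ 1) ∧ ∀ u v, MMD G u v → 1 ≤ g u + g v := by
  refine and_congr_right fun hg => ⟨fun h u v huv => ?_, fun h x y hxy => ?_⟩
  · have := h u v huv.1
    rwa [Sset_eq_of_mmd hG huv, finsum_mem_pair huv.1] at this
  · obtain ⟨u, v, huv, hu, hv⟩ := exists_mmd_mem_Sset hG hxy
    calc 1 ≤ g u + g v := h u v huv
      _ = ∑ᶠ z ∈ ({u, v} : Set V), g z := (finsum_mem_pair huv.1).symm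
      _ ≤ ∑ᶠ z ∈ Sset G x y, g z := by
        rw [finsum_mem_def, finsum_mem_def]
        refine finsum_le_finsum' (Set.toFinite _) (Set.toFinite _) fun z => ?_
        exact Set.indicator_le_indicator_of_subset (by simp [Set.insert_subset_iff, hu, hv])
          (fun z => (hg z).1) z

lemma le_sdimf (hG : G.Connected) {r : ℝ} (h : ∀ g, IsSRF G g → r ≤ ∑ᶠ v, g v) :
    r ≤ sdimf G :=
  le_csInf ⟨_, 1, (isSRF_iff hG).2 ⟨fun _ => by norm_num, fun _ _ _ => by norm_num⟩, rfl⟩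
    (by rintro _ ⟨g, hg, rfl⟩; exact h g hg)

lemma sdimf_le_finsum_mem_Mset (hG : G.Connected) {f : V → ℝ}
    (hf : ∀ v, 0 ≤ f v ∧ f v ≤ 1) (hMMD : ∀ u v, MMD G u v → 1 ≤ f u + f v) :
    sdimf G ≤ ∑ᶠ v ∈ Mset G, f v := by
  rw [finsum_mem_def]
  refine sdimf_le ((isSRF_iff hG).2 ⟨fun v => ?_, fun u v huv => ?_⟩)
  · by_cases hv : v ∈ Mset G <;> simp [hv, hf v]
  · have hu : u ∈ Mset G := ⟨v, huv⟩
    have hv : v ∈ Mset G := ⟨u, huv.symm⟩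
    rw [Set.indicator_of_mem hu, Set.indicator_of_mem hv]
    exact hMMD u v huv

lemma sdimf_le_ncard_Mset_div_two (hG : G.Connected) : sdimf G ≤ (Mset G).ncard / 2 := by
  classical
  have := Fintype.ofFinite V
  have h := sdimf_le_finsum_mem_Mset hG (f := fun _ => 1 / 2) (fun _ => by norm_num)
    (fun _ _ _ => by norm_num)
  rwa [finsum_mem_eq_toFinset_sum, Finset.sum_const, ← Set.ncard_eq_toFinset_card',
    nsmul_eq_mul, ← div_eq_mul_one_div] at h

end Resolving

section LexProd

variable {V W : Type*} {G : SimpleGraph V} {H : SimpleGraph W} {u u' : V} {v v' : W}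

@[simps]
def lexProd.sectionHom (φ : V → W) : G →g lexProd G H := ⟨fun u => (u, φ u), Or.inl⟩

@[simps]
def lexProd.fiberHom (u : V) : H →g lexProd G H := ⟨fun v => (u, v), fun h => Or.inr ⟨rfl, h⟩⟩

lemma lexProd_connected (hG : G.Connected) (hH : H.Connected) : (lexProd G H).Connected := by
  have := hG.nonempty
  have := hH.nonempty
  refine (connected_iff _).2 ⟨fun x y => ?_, inferInstance⟩
  exact ((hG x.1 y.1).map (lexProd.sectionHom fun _ => x.2)).trans
    ((hH x.2 y.2).map (lexProd.fiberHom y.1))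

lemma dist_fst_le_length (hG : G.Connected) {x y : V × W} (p : (lexProd G H).Walk x y) :
    G.dist x.1 y.1 ≤ p.length := by
  induction p with
  | nil => simp
  | @cons a b c hab q ih =>
    rw [Walk.length_cons]
    rcases hab with hab | ⟨hab, -⟩
    · have := hG.dist_triangle (u := a.1) (v := b.1) (w := c.1)
      rw [dist_eq_one_iff_adj.2 hab] at this
      omega
    · rw [hab]
      omega

lemma lexProd_dist_of_ne (hG : G.Connected) (h : u ≠ u') (v v' : W) :
    (lexProd G H).dist (u, v) (u', v') = G.dist u u' := by
  classical
  -- a section through `(u, v)` and `(u', v')` carries `u`–`u'` walks to `G[H]`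
  let f : G →g lexProd G H := lexProd.sectionHom (Function.update (fun _ => v) u' v')
  have hfu : f u = (u, v) := by simp [f, h]
  have hfu' : f u' = (u', v') := by simp [f]
  refine le_antisymm (hfu ▸ hfu' ▸ (hG u u').dist_map_le f) ?_
  obtain ⟨p, hp⟩ := (hfu ▸ hfu' ▸ (hG u u').map f).exists_walk_length_eq_dist
  exact hp ▸ dist_fst_le_length hG p

lemma lexProd_dist_fiber [Finite W] (hH : H.Connected) (hdiam : H.diam ≤ 2) (u : V) (v v' : W) :
    (lexProd G H).dist (u, v) (u, v') = H.dist v v' := by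
  refine le_antisymm ((hH v v').dist_map_le (lexProd.fiberHom u)) ?_
  rcases eq_or_ne v v' with rfl | hne
  · simp
  have := hH.nonempty
  have hpos : 0 < (lexProd G H).dist (u, v) (u, v') :=
    ((hH v v').map (lexProd.fiberHom (G := G) u)).pos_dist_of_ne (by simpa)
  have hle : H.dist v v' ≤ 2 := (dist_le_diam (connected_iff_ediam_ne_top.1 hH)).trans hdiam
  by_contra! hlt
  have hone : (lexProd G H).dist (u, v) (u, v') = 1 := by omega
  rcases dist_eq_one_iff_adj.1 hone with hadj | ⟨-, hadj⟩
  · exact G.loopless.irrefl u hadj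
  · rw [dist_eq_one_iff_adj.2 hadj] at hlt
    omega

lemma MaxDistFrom.of_lexProd (hG : G.Connected) (hne : u ≠ u')
    (h : MaxDistFrom (lexProd G H) (u, v) (u', v')) : MaxDistFrom G u u' := by
  intro w hw
  rcases eq_or_ne w u' with rfl | hw'
  · simp
  · have := h (w, v) (Or.inl hw)
    rwa [lexProd_dist_of_ne hG hw', lexProd_dist_of_ne hG hne] at this

lemma MaxDistFrom.lexProd (hG : G.Connected) (hne : u ≠ u') (hadj : ¬G.Adj u u')
    (h : MaxDistFrom G u u') : MaxDistFrom (lexProd G H) (u, v) (u', v') := by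
  rintro ⟨w, c⟩ (hw | ⟨hw, -⟩)
  · have hw' : w ≠ u' := by rintro rfl; exact hadj hw
    rw [lexProd_dist_of_ne hG hw', lexProd_dist_of_ne hG hne]
    exact h w hw
  · obtain rfl : u = w := hw
    rw [lexProd_dist_of_ne hG hne, lexProd_dist_of_ne hG hne]

lemma maxDistFrom_lexProd_fiber_iff [Finite W] (hG : G.Connected) (hH : H.Connected)
    (hdiam : H.diam ≤ 2) (hne : v ≠ v') :
    MaxDistFrom (lexProd G H) (u, v) (u, v') ↔ MaxDistFrom H v v' := by
  constructor
  · intro h c hc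
    simpa only [lexProd_dist_fiber hH hdiam] using h (u, c) (Or.inr ⟨rfl, hc⟩)
  · rintro h ⟨w, c⟩ (hw | ⟨hw, hc⟩)
    · rw [lexProd_dist_of_ne hG hw.ne', lexProd_dist_fiber hH hdiam,
        dist_eq_one_iff_adj.2 hw.symm]
      exact hH.pos_dist_of_ne hne
    · obtain rfl : u = w := hw
      rw [lexProd_dist_fiber hH hdiam, lexProd_dist_fiber hH hdiam]
      exact h c hc

lemma mmd_lexProd_iff [Finite W] (hG : G.Connected)
    (htwinfree : ∀ u v : V, insert u (G.neighborSet u) = insert v (G.neighborSet v) → u = v)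
    (hH : H.Connected) (hdiam : H.diam ≤ 2) :
    MMD (lexProd G H) (u, v) (u', v') ↔ MMD G u u' ∨ (u = u' ∧ MMD H v v') := by
  rcases eq_or_ne u u' with rfl | hne
  · rcases eq_or_ne v v' with rfl | hvv
    · simp [MMD]
    · simp only [MMD, ne_eq, Prod.mk.injEq, hvv, maxDistFrom_lexProd_fiber_iff hG hH hdiam hvv,
        maxDistFrom_lexProd_fiber_iff hG hH hdiam (Ne.symm hvv)]
      simp
  · refine ⟨fun h => Or.inl ⟨hne, h.2.1.of_lexProd hG hne, h.2.2.of_lexProd hG hne.symm⟩, ?_⟩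
    rintro (h | ⟨rfl, -⟩)
    · exact ⟨by simp [hne], h.2.1.lexProd hG hne (h.not_adj htwinfree),
        h.2.2.lexProd hG hne.symm (h.symm.not_adj htwinfree)⟩
    · exact absurd rfl hne

lemma Mset_lexProd [Finite W] (hG : G.Connected)
    (htwinfree : ∀ u v : V, insert u (G.neighborSet u) = insert v (G.neighborSet v) → u = v)
    (hH : H.Connected) (hdiam : H.diam ≤ 2) :
    Mset (lexProd G H) = Mset G ×ˢ Set.univ ∪ Set.univ ×ˢ Mset H := by
  ext ⟨u, v⟩
  simp only [Mset, Set.mem_union, Set.mem_prod, Set.mem_ofPred_eq, Set.mem_univ, and_true,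
    true_and, Prod.exists, mmd_lexProd_iff hG htwinfree hH hdiam]
  constructor
  · rintro ⟨a, b, h | ⟨-, h⟩⟩
    exacts [Or.inl ⟨a, h⟩, Or.inr ⟨b, h⟩]
  · rintro (⟨a, h⟩ | ⟨b, h⟩)
    exacts [⟨a, v, Or.inl h⟩, ⟨u, b, Or.inr ⟨rfl, h⟩⟩]

end LexProd

section Counting

variable {V W : Type*}

lemma Set.ncard_prod_univ_union_univ_prod [Finite V] [Finite W] (s : Set V) (t : Set W) :
    ((s ×ˢ Set.univ ∪ Set.univ ×ˢ t).ncard : ℝ) =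
      s.ncard * Nat.card W + Nat.card V * t.ncard - s.ncard * t.ncard := by
  have h := Set.ncard_union_add_ncard_inter (s ×ˢ (Set.univ : Set W)) (Set.univ ×ˢ t)
  rw [Set.prod_inter_prod, Set.inter_univ, Set.univ_inter, Set.ncard_prod, Set.ncard_prod,
    Set.ncard_prod, Set.ncard_univ, Set.ncard_univ] at h
  rw [eq_sub_iff_add_eq]
  exact_mod_cast h

variable [Fintype V] [Fintype W] {g : V × W → ℝ} {s : Set V} {t : Set W} {a b : ℝ}

lemma le_finsum_of_row_col_bounds (hg : ∀ z, 0 ≤ g z) (hrow : ∀ u, a ≤ ∑ᶠ v ∈ t, g (u, v))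
    (hcol : ∀ v, b ≤ ∑ᶠ u ∈ s, g (u, v)) :
    Fintype.card V * a + (Fintype.card W - t.ncard) * b ≤ ∑ᶠ z, g z := by
  classical
  simp only [finsum_mem_eq_toFinset_sum] at hrow hcol
  rw [finsum_eq_sum_of_fintype]
  calc
    _ = ∑ _u : V, a + ∑ _v ∈ t.toFinsetᶜ, b := by
      rw [Set.ncard_eq_toFinset_card', ← Finset.card_add_card_compl t.toFinset]
      simp only [Finset.sum_const, Finset.card_univ, nsmul_eq_mul, Nat.cast_add]
      ring
    _ ≤ ∑ u, ∑ v ∈ t.toFinset, g (u, v) + ∑ v ∈ t.toFinsetᶜ, ∑ u ∈ s.toFinset, g (u, v) :=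
      add_le_add (Finset.sum_le_sum fun u _ => hrow u) (Finset.sum_le_sum fun v _ => hcol v)
    _ ≤ ∑ u, ∑ v ∈ t.toFinset, g (u, v) + ∑ v ∈ t.toFinsetᶜ, ∑ u, g (u, v) := by
      gcongr with v
      · exact fun _ _ _ => hg _
      · exact Finset.subset_univ _
    _ = ∑ z, g z := by
      rw [Finset.sum_comm (s := t.toFinsetᶜ), ← Finset.sum_add_distrib, Fintype.sum_prod_type]
      simp_rw [Finset.sum_add_sum_compl]

lemma max_le_finsum_of_row_col_bounds (hg : ∀ z, 0 ≤ g z)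
    (hrow : ∀ u, a ≤ ∑ᶠ v ∈ t, g (u, v)) (hcol : ∀ v, b ≤ ∑ᶠ u ∈ s, g (u, v)) :
    max (Fintype.card V * a + (Fintype.card W - t.ncard) * b)
      ((Fintype.card V - s.ncard) * a + Fintype.card W * b) ≤ ∑ᶠ z, g z := by
  refine max_le (le_finsum_of_row_col_bounds hg hrow hcol) ?_
  have h := le_finsum_of_row_col_bounds (g := fun z => g (Equiv.prodComm W V z))
    (fun z => hg _) hcol hrow
  rw [finsum_comp_equiv] at h
  linarith

end Counting

theorem sdimf_lexProd_bounds_general {V W : Type*} [Fintype V] [Fintype W]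
    (G : SimpleGraph V) (H : SimpleGraph W)
    (hG : G.Connected)
    (htwinfree : ∀ u v : V,
      insert u (G.neighborSet u) = insert v (G.neighborSet v) → u = v)
    (hH : H.Connected) (hdiam : H.diam ≤ 2) :
    max ((Fintype.card V : ℝ) * sdimf H
          + ((Fintype.card W : ℝ) - ((Mset H).ncard : ℝ)) * sdimf G)
        (((Fintype.card V : ℝ) - ((Mset G).ncard : ℝ)) * sdimf H
          + (Fintype.card W : ℝ) * sdimf G)
      ≤ sdimf (lexProd G H) ∧
    sdimf (lexProd G H) ≤
      ((Fintype.card V : ℝ) * ((Mset H).ncard : ℝ)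
        + (Fintype.card W : ℝ) * ((Mset G).ncard : ℝ)
        - ((Mset G).ncard : ℝ) * ((Mset H).ncard : ℝ)) / 2 := by
  have hL := lexProd_connected hG hH
  refine ⟨le_sdimf hL fun g hg => ?_, ?_⟩
  · obtain ⟨hg01, hgMMD⟩ := (isSRF_iff hL).1 hg
    exact max_le_finsum_of_row_col_bounds (fun z => (hg01 z).1)
      (fun u => sdimf_le_finsum_mem_Mset hH (fun v => hg01 (u, v)) fun _ _ h =>
        hgMMD _ _ ((mmd_lexProd_iff hG htwinfree hH hdiam).2 (Or.inr ⟨rfl, h⟩)))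
      (fun v => sdimf_le_finsum_mem_Mset hG (fun u => hg01 (u, v)) fun _ _ h =>
        hgMMD _ _ ((mmd_lexProd_iff hG htwinfree hH hdiam).2 (Or.inl h)))
  · calc sdimf (lexProd G H) ≤ (Mset (lexProd G H)).ncard / 2 := sdimf_le_ncard_Mset_div_two hL
      _ = _ := by
        rw [Mset_lexProd hG htwinfree hH hdiam, Set.ncard_prod_univ_union_univ_prod,
          Nat.card_eq_fintype_card, Nat.card_eq_fintype_card]
        ring

/-- Let `G` be connected of order `n ≥ 2` without true twin vertices,
and let `H` be connected of order `m ≥ 2` with `diam(H) ≤ 2`; put `n' = |M(G)|` and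
`m' = |M(H)|`. Then
`sdim_f(G[H]) ≥ max{ n·sdim_f(H) + (m−m')·sdim_f(G), (n−n')·sdim_f(H) + m·sdim_f(G) }`
and `sdim_f(G[H]) ≤ (nm' + mn' − n'm')/2`. -/
theorem sdimf_lexProd_bounds {V W : Type*} [Fintype V] [Fintype W]
    (G : SimpleGraph V) (H : SimpleGraph W)
    (hG : G.Connected) (hn : 2 ≤ Fintype.card V)
    (htwinfree : ∀ u v : V,
      insert u (G.neighborSet u) = insert v (G.neighborSet v) → u = v)
    (hH : H.Connected) (hm : 2 ≤ Fintype.card W) (hdiam : H.diam ≤ 2) :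
    max ((Fintype.card V : ℝ) * sdimf H
          + ((Fintype.card W : ℝ) - ((Mset H).ncard : ℝ)) * sdimf G)
        (((Fintype.card V : ℝ) - ((Mset G).ncard : ℝ)) * sdimf H
          + (Fintype.card W : ℝ) * sdimf G)
      ≤ sdimf (lexProd G H) ∧
    sdimf (lexProd G H) ≤
      ((Fintype.card V : ℝ) * ((Mset H).ncard : ℝ)
        + (Fintype.card W : ℝ) * ((Mset G).ncard : ℝ)
        - ((Mset G).ncard : ℝ) * ((Mset H).ncard : ℝ)) / 2 :=
  sdimf_lexProd_bounds_general G H hG htwinfree hH hdiam
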